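/- Let s, t ∈ S be distinct binary sequences and let m be the least index with s_m ≠ t_m. Then the local intersection multiplicity at the origin of the formal curves C_s = {φ_s = 0} and C_t = {φ_t = 0}, namely dim_ℂ ℂ⟦X,Y⟧/(φ_s, φ_t), equals (4^{m+1} + 2)/3. -/

import Mathlib

/-!
Let `m` be the first index where `s` and `t` differ and `N = (4^m - 1)/3`. By the recursion,
`a^s` and `a^t` agree below `N` and differ at `N`, so `φ_t - φ_s = Y^d u` with `d = 4N + 2` and
`u` a unit. Hence `(φ_s, φ_t) = (X + g(Y), Y^d)` for a polynomial `g` divisible by `Y`. This ideal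
contains `X^d` and `Y^d`, so its quotient is a quotient of the polynomial ring, namely
`ℂ[X, Y]/(X + g(Y), Y^d) ≅ ℂ[Y]/(Y^d)`, of dimension `d = (4^(m+1) + 2)/3`.
-/

noncomputable section

/-- The space of binary sequences `{0,1}^ℕ`. -/
abbrev BinSeq := ℕ → Fin 2

/-- The left-shift map `σ`. -/
def shift (s : BinSeq) : BinSeq := fun n => s (n + 1)

/-- `a : S → ℕ → ℂ` satisfies the recursion defining the coefficients `aₙˢ`:
`a₀ˢ = (−1)^{s₀}` and `a_{n+1}ˢ = −(1/(2a₀ˢ)) Σ_{i+j=n+1, i,j≥1} aᵢˢ aⱼˢ` if `4 ∤ n`,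
with the extra term `−a_{n/4}^{σ(s)}/(2a₀ˢ)` if `4 ∣ n`. -/
def IsCoeffFamily (a : BinSeq → ℕ → ℂ) : Prop :=
  (∀ s : BinSeq, a s 0 = (-1 : ℂ) ^ (s 0 : ℕ)) ∧
  (∀ (s : BinSeq) (n : ℕ), a s (n + 1) =
    if 4 ∣ n then
      -(a (shift s) (n / 4)) / (2 * a s 0)
        - (∑ i ∈ Finset.Ico 1 (n + 1), a s i * a s (n + 1 - i)) / (2 * a s 0)
    else
      -(∑ i ∈ Finset.Ico 1 (n + 1), a s i * a s (n + 1 - i)) / (2 * a s 0))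

/-- The series `Σ_{n≥0} aₙˢ Y^(2+4n)` viewed inside `ℂ⟦X,Y⟧`
(variable `0` is `X`, variable `1` is `Y`). -/
def tailSer (a : BinSeq → ℕ → ℂ) (s : BinSeq) : MvPowerSeries (Fin 2) ℂ :=
  fun d => if d 0 = 0 ∧ d 1 % 4 = 2 then a s ((d 1 - 2) / 4) else 0

/-- The two-variable series `φ_s = X + Σ_{n≥0} aₙˢ Y^(2+4n) ∈ ℂ⟦X,Y⟧`. -/
def phi (a : BinSeq → ℕ → ℂ) (s : BinSeq) : MvPowerSeries (Fin 2) ℂ :=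
  MvPowerSeries.X 0 + tailSer a s

theorem Ideal.span_pair_eq_of_sub_eq_mul_isUnit {R : Type*} [CommRing R] {f g h u : R}
    (hu : IsUnit u) (hfg : g - f = h * u) : Ideal.span {f, g} = Ideal.span {f, h} := by
  rw [show g = h * u + 1 * f by linear_combination hfg, Ideal.span_pair_add_mul_left,
    Ideal.span_insert, Ideal.span_singleton_mul_right_unit hu, ← Ideal.span_insert]

theorem Ideal.span_pair_eq_of_dvd_sub {R : Type*} [CommRing R] {f f' h : R} (hd : h ∣ f - f') :
    Ideal.span {f, h} = Ideal.span {f', h} := by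
  obtain ⟨c, hc⟩ := hd
  rw [show f = f' + c * h by linear_combination hc, Ideal.span_pair_add_mul_right]

theorem Polynomial.coeff_toMvPolynomial {R σ : Type*} [CommSemiring R] [DecidableEq σ]
    (p : Polynomial R) (i : σ) (e : σ →₀ ℕ) :
    MvPolynomial.coeff e (p.toMvPolynomial i) =
      if e = Finsupp.single i (e i) then p.coeff (e i) else 0 := by
  conv_lhs => rw [p.as_sum_support_C_mul_X_pow]
  simp only [map_sum, map_mul, map_pow, Polynomial.toMvPolynomial_C, Polynomial.toMvPolynomial_X,
    MvPolynomial.C_mul_X_pow_eq_monomial, MvPolynomial.coeff_sum, MvPolynomial.coeff_monomial]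
  split_ifs with he
  · rw [Finset.sum_eq_single (e i), if_pos he.symm]
    · exact fun n _ hn => if_neg fun h => hn (by simpa using congr($h i))
    · intro hi
      rw [Polynomial.notMem_support_iff.1 hi, ite_self]
  · refine Finset.sum_eq_zero fun n _ => if_neg fun hn => he ?_
    rw [← hn, Finsupp.single_eq_same]

namespace MvPowerSeries

variable {R : Type*} [CommRing R]

theorem mem_span_X_pow_pair_iff {d : ℕ} {F : MvPowerSeries (Fin 2) R} :
    F ∈ Ideal.span {X 0 ^ d, X 1 ^ d} ↔
      ∀ e : Fin 2 →₀ ℕ, e 0 < d → e 1 < d → coeff e F = 0 := by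
  constructor
  · rintro hF e h0 h1
    obtain ⟨u, v, rfl⟩ := Ideal.mem_span_pair.1 hF
    rw [map_add, X_pow_dvd_iff.1 (dvd_mul_left _ u) e h0,
      X_pow_dvd_iff.1 (dvd_mul_left _ v) e h1, add_zero]
  · intro hF
    let F₀ : MvPowerSeries (Fin 2) R := fun e => if d ≤ e 0 then coeff e F else 0
    obtain ⟨u, hu⟩ : X 0 ^ d ∣ F₀ := X_pow_dvd_iff.2 fun e he => if_neg (by omega)
    obtain ⟨v, hv⟩ : X 1 ^ d ∣ F - F₀ := X_pow_dvd_iff.2 fun e he => by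
      change coeff e F - (if d ≤ e 0 then coeff e F else 0) = 0
      split_ifs with h
      · exact sub_self _
      · rw [hF e (by omega) he, sub_zero]
    exact Ideal.mem_span_pair.2 ⟨u, v, by linear_combination -hu - hv⟩

theorem sub_trunc'_mem_span_X_pow_pair (d : ℕ) (F : MvPowerSeries (Fin 2) R) :
    F - trunc' R (Finsupp.single 0 (d - 1) + Finsupp.single 1 (d - 1)) F ∈
      Ideal.span {X 0 ^ d, X 1 ^ d} := by
  refine mem_span_X_pow_pair_iff.2 fun e h0 h1 => ?_
  have he : e ≤ Finsupp.single 0 (d - 1) + Finsupp.single 1 (d - 1) :=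
    Finsupp.le_def.2 (Fin.forall_fin_two.2 ⟨by simp; omega, by simp; omega⟩)
  rw [map_sub, MvPolynomial.coeff_coe, coeff_trunc', if_pos he, sub_self]

theorem X_one_pow_dvd_sub_trunc {F : MvPowerSeries (Fin 2) R}
    (hF : ∀ e : Fin 2 →₀ ℕ, e 0 ≠ 0 → coeff e F = 0) (d : ℕ) :
    X 1 ^ d ∣ F - (((PowerSeries.trunc d (PowerSeries.mk fun j => coeff (Finsupp.single 1 j) F)
      ).toMvPolynomial 1 : MvPolynomial (Fin 2) R) : MvPowerSeries (Fin 2) R) := by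
  refine X_pow_dvd_iff.2 fun e he => ?_
  rw [map_sub, MvPolynomial.coeff_coe, Polynomial.coeff_toMvPolynomial]
  split_ifs with h
  · rw [PowerSeries.coeff_trunc, if_pos he, PowerSeries.coeff_mk, ← h, sub_self]
  · refine (hF e fun h0 => h ?_).symm ▸ sub_zero _
    ext i
    fin_cases i <;> simp [h0]

end MvPowerSeries

namespace MvPolynomial

variable {R : Type*} [CommRing R]

local notation "coeHom" => coeToMvPowerSeries.ringHom (σ := Fin 2) (R := R)

theorem mem_span_X_pow_pair_of_coeff_eq_zero {d : ℕ} {p : MvPolynomial (Fin 2) R}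
    (hp : ∀ e : Fin 2 →₀ ℕ, e 0 < d → e 1 < d → coeff e p = 0) :
    p ∈ Ideal.span {X 0 ^ d, X 1 ^ d} := by
  simp only [X_pow_eq_monomial]
  rw [← Set.image_pair (fun e => monomial e (1 : R)), mem_ideal_span_monomial_image]
  intro e he
  by_cases h0 : d ≤ e 0
  · exact ⟨_, Set.mem_insert _ _, Finsupp.single_le_iff.2 h0⟩
  · refine ⟨_, Set.mem_insert_of_mem _ rfl, Finsupp.single_le_iff.2 ?_⟩
    by_contra h1
    exact mem_support_iff.1 he (hp e (by omega) (by omega))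

theorem surjective_mkₐ_comp_coe {I : Ideal (MvPowerSeries (Fin 2) R)} {d : ℕ}
    (h0 : MvPowerSeries.X 0 ^ d ∈ I) (h1 : MvPowerSeries.X 1 ^ d ∈ I) :
    Function.Surjective ((Ideal.Quotient.mkₐ R I).comp (coeToMvPowerSeries.algHom R)) := by
  intro x
  obtain ⟨F, rfl⟩ := Ideal.Quotient.mk_surjective x
  refine ⟨MvPowerSeries.trunc' R (Finsupp.single 0 (d - 1) + Finsupp.single 1 (d - 1)) F, ?_⟩
  simp only [AlgHom.comp_apply, coeToMvPowerSeries.algHom_apply, Algebra.algebraMap_self,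
    MvPowerSeries.map_id, RingHom.id_apply, Ideal.Quotient.mkₐ_eq_mk]
  refine (Ideal.Quotient.eq.2 ?_).symm
  refine Ideal.span_le.2 ?_ (MvPowerSeries.sub_trunc'_mem_span_X_pow_pair d F)
  simp [Set.pair_subset_iff, h0, h1]

theorem comap_map_coe {J : Ideal (MvPolynomial (Fin 2) R)} {d : ℕ}
    (h0 : X 0 ^ d ∈ J) (h1 : X 1 ^ d ∈ J) :
    (J.map coeHom).comap coeHom = J := by
  set B : Ideal (MvPowerSeries (Fin 2) R) :=
    Ideal.span {MvPowerSeries.X 0 ^ d, MvPowerSeries.X 1 ^ d}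
  have hB : ∀ F ∈ J.map coeHom, ∃ j ∈ J, F - (j : MvPowerSeries (Fin 2) R) ∈ B := by
    intro F hF
    induction hF using Submodule.span_induction with
    | mem F hF =>
      obtain ⟨j, hj, rfl⟩ := hF
      exact ⟨j, hj, by simp⟩
    | zero => exact ⟨0, J.zero_mem, by simp⟩
    | add F G _ _ hF hG =>
      obtain ⟨j, hj, hFj⟩ := hF
      obtain ⟨k, hk, hGk⟩ := hG
      refine ⟨j + k, J.add_mem hj hk, ?_⟩
      convert B.add_mem hFj hGk using 1
      push_cast
      ring
    | smul c F _ hF =>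
      obtain ⟨j, hj, hFj⟩ := hF
      set c' := MvPowerSeries.trunc' R (Finsupp.single 0 (d - 1) + Finsupp.single 1 (d - 1)) c
      refine ⟨c' * j, J.mul_mem_left _ hj, ?_⟩
      convert B.add_mem (B.mul_mem_left c hFj) (B.mul_mem_right (j : MvPowerSeries (Fin 2) R)
        (MvPowerSeries.sub_trunc'_mem_span_X_pow_pair d c)) using 1
      simp only [smul_eq_mul, coe_mul]
      ring
  refine le_antisymm (fun p hp => ?_) Ideal.le_comap_map
  obtain ⟨j, hj, hpj⟩ := hB _ hp
  have hbox : p - j ∈ Ideal.span {X 0 ^ d, X 1 ^ d} := by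
    refine mem_span_X_pow_pair_of_coeff_eq_zero fun e he0 he1 => ?_
    rw [← coeff_coe, ← coeToMvPowerSeries.ringHom_apply, map_sub]
    exact MvPowerSeries.mem_span_X_pow_pair_iff.1 hpj e he0 he1
  have hle : Ideal.span {X 0 ^ d, X 1 ^ d} ≤ J := by
    simp [Ideal.span_le, Set.pair_subset_iff, h0, h1]
  simpa using J.add_mem (hle hbox) hj

def quotientEquivQuotientMapCoe {J : Ideal (MvPolynomial (Fin 2) R)} {d : ℕ}
    (h0 : X 0 ^ d ∈ J) (h1 : X 1 ^ d ∈ J) :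
    (MvPolynomial (Fin 2) R ⧸ J) ≃ₐ[R] (MvPowerSeries (Fin 2) R ⧸ J.map coeHom) :=
  (Ideal.quotientEquivAlgOfEq R <| by
      ext p
      simp only [RingHom.mem_ker, AlgHom.comp_apply, coeToMvPowerSeries.algHom_apply,
        Algebra.algebraMap_self, MvPowerSeries.map_id, RingHom.id_apply,
        Ideal.Quotient.mkₐ_eq_mk, Ideal.Quotient.eq_zero_iff_mem]
      exact ⟨Ideal.mem_map_of_mem coeHom, fun h => (comap_map_coe h0 h1).le h⟩).trans
    (Ideal.quotientKerAlgEquivOfSurjective <| surjective_mkₐ_comp_coe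
      (by simpa using Ideal.mem_map_of_mem coeHom h0)
      (by simpa using Ideal.mem_map_of_mem coeHom h1))

theorem sub_toMvPolynomial_aeval_mem_span (q : Polynomial R) (p : MvPolynomial (Fin 2) R) :
    p - (aeval ![-q, Polynomial.X] p).toMvPolynomial 1 ∈
      Ideal.span {(X 0 : MvPolynomial (Fin 2) R) + q.toMvPolynomial 1} := by
  rw [← Ideal.Quotient.eq]
  change Ideal.Quotient.mkₐ R _ p = ((Ideal.Quotient.mkₐ R _).comp
    ((Polynomial.toMvPolynomial 1).comp (aeval ![-q, Polynomial.X]))) p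
  congr 1
  refine algHom_ext (Fin.forall_fin_two.2 ⟨Ideal.Quotient.eq.2 ?_, by simp⟩)
  simp

theorem ker_mkₐ_comp_aeval (q : Polynomial R) (d : ℕ) :
    RingHom.ker ((Ideal.Quotient.mkₐ R (Ideal.span {Polynomial.X ^ d})).comp
      (aeval ![-q, Polynomial.X])) =
      Ideal.span {X 0 + q.toMvPolynomial 1, X 1 ^ d} := by
  set J : Ideal (MvPolynomial (Fin 2) R) := Ideal.span {X 0 + q.toMvPolynomial 1, X 1 ^ d}
  refine le_antisymm (fun p hp => ?_) ?_
  · obtain ⟨c, hc⟩ := Ideal.mem_span_singleton'.1 (Ideal.Quotient.eq_zero_iff_mem.1 hp)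
    have h₁ : p - (aeval ![-q, Polynomial.X] p).toMvPolynomial 1 ∈ J :=
      Ideal.span_mono (Set.singleton_subset_iff.2 (Set.mem_insert _ _))
        (sub_toMvPolynomial_aeval_mem_span q p)
    have h₂ : (aeval ![-q, Polynomial.X] p).toMvPolynomial 1 ∈ J := by
      rw [show aeval ![-q, Polynomial.X] p = c * Polynomial.X ^ d from hc.symm, map_mul, map_pow,
        Polynomial.toMvPolynomial_X]
      exact J.mul_mem_left _ (Ideal.subset_span (by simp))
    simpa using J.add_mem h₁ h₂
  · rw [Ideal.span_le, Set.pair_subset_iff]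
    simp [aeval_toMvPolynomial]

theorem surjective_mkₐ_comp_aeval (q : Polynomial R) (d : ℕ) :
    Function.Surjective ((Ideal.Quotient.mkₐ R (Ideal.span {Polynomial.X ^ d})).comp
      (aeval ![-q, Polynomial.X])) := by
  intro x
  obtain ⟨r, rfl⟩ := Ideal.Quotient.mk_surjective x
  exact ⟨r.toMvPolynomial 1, by simp [aeval_toMvPolynomial]⟩

def quotientSpanXAddEquiv (q : Polynomial R) (d : ℕ) :
    (MvPolynomial (Fin 2) R ⧸
        (Ideal.span {X 0 + q.toMvPolynomial 1, X 1 ^ d} : Ideal (MvPolynomial (Fin 2) R))) ≃ₐ[R]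
      Polynomial R ⧸ (Ideal.span {Polynomial.X ^ d} : Ideal (Polynomial R)) :=
  (Ideal.quotientEquivAlgOfEq R (ker_mkₐ_comp_aeval q d).symm).trans
    (Ideal.quotientKerAlgEquivOfSurjective (surjective_mkₐ_comp_aeval q d))

theorem X_zero_pow_mem_span {q : Polynomial R} (hq : Polynomial.X ∣ q) (d : ℕ) :
    X 0 ^ d ∈
      (Ideal.span {X 0 + q.toMvPolynomial 1, X 1 ^ d} : Ideal (MvPolynomial (Fin 2) R)) := by
  set J : Ideal (MvPolynomial (Fin 2) R) := Ideal.span {X 0 + q.toMvPolynomial 1, X 1 ^ d}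
  have h₁ : X 0 ^ d - (-q.toMvPolynomial 1) ^ d ∈ J :=
    Ideal.mem_of_dvd _ (by simpa using sub_dvd_pow_sub_pow (X 0) (-q.toMvPolynomial 1) d)
      (Ideal.subset_span (Set.mem_insert _ _))
  have h₂ : (-q.toMvPolynomial 1) ^ d ∈ J := by
    refine Ideal.mem_of_dvd _ ?_ (Ideal.subset_span (Set.mem_insert_of_mem _ rfl))
    rw [neg_pow]
    have hY : (X 1 : MvPolynomial (Fin 2) R) ∣ q.toMvPolynomial 1 := by
      simpa using map_dvd (Polynomial.toMvPolynomial 1) hq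
    exact (pow_dvd_pow_of_dvd hY d).mul_left _
  simpa using J.add_mem h₁ h₂

end MvPolynomial

namespace MvPowerSeries

variable {R : Type*} [CommRing R]

def quotientSpanXAddEquiv {q : Polynomial R} (hq : Polynomial.X ∣ q) (d : ℕ) :
    (MvPowerSeries (Fin 2) R ⧸ (Ideal.span
      {X 0 + ((q.toMvPolynomial 1 : MvPolynomial (Fin 2) R) : MvPowerSeries (Fin 2) R), X 1 ^ d} :
        Ideal (MvPowerSeries (Fin 2) R))) ≃ₐ[R]
      Polynomial R ⧸ (Ideal.span {Polynomial.X ^ d} : Ideal (Polynomial R)) :=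
  (Ideal.quotientEquivAlgOfEq R (by
      rw [Ideal.map_span, Set.image_pair]
      simp [MvPolynomial.coeToMvPowerSeries.ringHom_apply])).trans <|
    (MvPolynomial.quotientEquivQuotientMapCoe (MvPolynomial.X_zero_pow_mem_span hq d)
      (Ideal.subset_span (Set.mem_insert_of_mem _ rfl))).symm.trans
    (MvPolynomial.quotientSpanXAddEquiv q d)

variable {K : Type*} [Field K]

theorem finite_quotient_span_X_add {q : Polynomial K} (hq : Polynomial.X ∣ q) (d : ℕ) :
    Module.Finite K (MvPowerSeries (Fin 2) K ⧸ (Ideal.span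
      {X 0 + ((q.toMvPolynomial 1 : MvPolynomial (Fin 2) K) : MvPowerSeries (Fin 2) K), X 1 ^ d} :
        Ideal (MvPowerSeries (Fin 2) K))) :=
  have := (Polynomial.monic_X_pow (R := K) d).finite_quotient
  Module.Finite.equiv (quotientSpanXAddEquiv hq d).symm.toLinearEquiv

theorem finrank_quotient_span_X_add {q : Polynomial K} (hq : Polynomial.X ∣ q) (d : ℕ) :
    Module.finrank K (MvPowerSeries (Fin 2) K ⧸ (Ideal.span
      {X 0 + ((q.toMvPolynomial 1 : MvPolynomial (Fin 2) K) : MvPowerSeries (Fin 2) K), X 1 ^ d} :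
        Ideal (MvPowerSeries (Fin 2) K))) = d := by
  rw [(quotientSpanXAddEquiv hq d).toLinearEquiv.finrank_eq, finrank_quotient_span_eq_natDegree,
    Polynomial.natDegree_X_pow]

end MvPowerSeries

-- `a_{4N+1}^s` is the first coefficient involving `a_N^{σ s}`, so a first difference of `s` and
-- `t` at position `m` first shows up in `a^s` at index `diffIndex m = (4^m - 1)/3`.
def diffIndex : ℕ → ℕ
  | 0 => 0
  | m + 1 => 4 * diffIndex m + 1

theorem three_mul_diffIndex_add_one (m : ℕ) : 3 * diffIndex m + 1 = 4 ^ m := by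
  induction m with
  | zero => rfl
  | succ m ih => rw [diffIndex, pow_succ]; omega

namespace IsCoeffFamily

variable {a : BinSeq → ℕ → ℂ}

theorem coeff_zero_ne_zero (ha : IsCoeffFamily a) (s : BinSeq) : a s 0 ≠ 0 := by
  rw [ha.1]
  exact pow_ne_zero _ (by norm_num)

theorem coeff_succ_sub_coeff_succ (ha : IsCoeffFamily a) {s t : BinSeq} {n : ℕ}
    (h : ∀ i ≤ n, a s i = a t i) :
    a s (n + 1) - a t (n + 1) =
      if 4 ∣ n then (a (shift t) (n / 4) - a (shift s) (n / 4)) / (2 * a s 0) else 0 := by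
  have hsum : ∑ i ∈ Finset.Ico 1 (n + 1), a s i * a s (n + 1 - i) =
      ∑ i ∈ Finset.Ico 1 (n + 1), a t i * a t (n + 1 - i) :=
    Finset.sum_congr rfl fun i hi => by
      rw [Finset.mem_Ico] at hi
      rw [h i (by omega), h (n + 1 - i) (by omega)]
  rw [ha.2 s n, ha.2 t n, hsum, h 0 (Nat.zero_le n)]
  split_ifs <;> ring

theorem coeff_eq_of_lt_diffIndex (ha : IsCoeffFamily a) {m : ℕ} {s t : BinSeq}
    (hst : ∀ k < m, s k = t k) {n : ℕ} (hn : n < diffIndex m) : a s n = a t n := by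
  induction m generalizing s t n with
  | zero => exact absurd hn (Nat.not_lt_zero n)
  | succ m ih =>
    induction n using Nat.strong_induction_on with
    | _ n ihn =>
      cases n with
      | zero => rw [ha.1, ha.1, hst 0 m.succ_pos]
      | succ n =>
        rw [← sub_eq_zero, ha.coeff_succ_sub_coeff_succ fun i hi => ihn i (by omega) (by omega)]
        split_ifs
        · rw [ih (s := shift s) (t := shift t) (fun k hk => hst (k + 1) (by omega))
            (n := n / 4) (by rw [diffIndex] at hn; omega), sub_self, zero_div]
        · rfl

theorem coeff_diffIndex_ne (ha : IsCoeffFamily a) {m : ℕ} {s t : BinSeq}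
    (hst : ∀ k < m, s k = t k) (hm : s m ≠ t m) : a s (diffIndex m) ≠ a t (diffIndex m) := by
  induction m generalizing s t with
  | zero =>
    rw [diffIndex, ha.1, ha.1]
    revert hm
    generalize s 0 = i
    generalize t 0 = j
    fin_cases i <;> fin_cases j <;> norm_num
  | succ m ih =>
    rw [← sub_ne_zero, diffIndex, ha.coeff_succ_sub_coeff_succ fun i hi =>
      ha.coeff_eq_of_lt_diffIndex hst (by rw [diffIndex]; omega), if_pos (dvd_mul_right 4 _),
      Nat.mul_div_cancel_left _ (by norm_num)]
    have hshift := ih (s := shift s) (t := shift t) (fun k hk => hst (k + 1) (by omega)) hm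
    exact div_ne_zero (sub_ne_zero.2 hshift.symm)
      (mul_ne_zero two_ne_zero (ha.coeff_zero_ne_zero s))

end IsCoeffFamily

theorem coeff_tailSer (a : BinSeq → ℕ → ℂ) (s : BinSeq) (e : Fin 2 →₀ ℕ) :
    MvPowerSeries.coeff e (tailSer a s) =
      if e 0 = 0 ∧ e 1 % 4 = 2 then a s ((e 1 - 2) / 4) else 0 :=
  rfl

theorem exists_tailSer_sub_tailSer_eq_X_pow_mul {a : BinSeq → ℕ → ℂ} {s t : BinSeq}
    {N : ℕ} (h : ∀ n < N, a s n = a t n) :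
    ∃ w, MvPowerSeries.constantCoeff w = a t N - a s N ∧
      tailSer a t - tailSer a s = MvPowerSeries.X 1 ^ (4 * N + 2) * w := by
  obtain ⟨w, hw⟩ : MvPowerSeries.X 1 ^ (4 * N + 2) ∣ tailSer a t - tailSer a s := by
    refine MvPowerSeries.X_pow_dvd_iff.2 fun e he => ?_
    rw [map_sub, coeff_tailSer, coeff_tailSer]
    split_ifs
    · rw [h _ (by omega), sub_self]
    · exact sub_self 0
  refine ⟨w, ?_, hw⟩
  have := congr(MvPowerSeries.coeff (Finsupp.single 1 (4 * N + 2)) $hw)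
  rw [MvPowerSeries.X_pow_eq, MvPowerSeries.coeff_monomial_mul, if_pos le_rfl, tsub_self,
    one_mul, MvPowerSeries.coeff_zero_eq_constantCoeff_apply, map_sub, coeff_tailSer,
    coeff_tailSer] at this
  simpa [Nat.add_mod] using this.symm

theorem exists_span_phi_pair_eq {a : BinSeq → ℕ → ℂ} (ha : IsCoeffFamily a) {m : ℕ}
    {s t : BinSeq} (hst : ∀ k < m, s k = t k) (hm : s m ≠ t m) :
    ∃ q : Polynomial ℂ, Polynomial.X ∣ q ∧ Ideal.span {phi a s, phi a t} =
      Ideal.span {MvPowerSeries.X 0 +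
        ((q.toMvPolynomial 1 : MvPolynomial (Fin 2) ℂ) : MvPowerSeries (Fin 2) ℂ),
        MvPowerSeries.X 1 ^ (4 * diffIndex m + 2)} := by
  obtain ⟨w, hw₀, hw⟩ := exists_tailSer_sub_tailSer_eq_X_pow_mul fun n hn =>
    ha.coeff_eq_of_lt_diffIndex hst hn
  have hw_unit : IsUnit w := MvPowerSeries.isUnit_iff_constantCoeff.2 <| by
    rw [hw₀]
    exact (sub_ne_zero.2 (ha.coeff_diffIndex_ne hst hm).symm).isUnit
  obtain ⟨c, hc⟩ := MvPowerSeries.X_one_pow_dvd_sub_trunc (F := tailSer a s)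
    (fun e he => by rw [coeff_tailSer, if_neg (by tauto)]) (4 * diffIndex m + 2)
  refine ⟨_, ?_, (Ideal.span_pair_eq_of_sub_eq_mul_isUnit hw_unit (by simpa [phi] using hw)).trans
    (Ideal.span_pair_eq_of_dvd_sub ⟨c, by rw [phi, ← hc]; ring⟩)⟩
  rw [Polynomial.X_dvd_iff, PowerSeries.coeff_trunc]
  simp [coeff_tailSer]

/-- If `s ≠ t` and `m` is the least index with `s m ≠ t m`, then the local intersection
multiplicity at the origin of the formal curves `C_s = {φ_s = 0}` and `C_t = {φ_t = 0}`,
namely `dim_ℂ ℂ⟦X,Y⟧/(φ_s, φ_t)`, equals `(4^(m+1) + 2)/3`. -/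
theorem stmt6 (a : BinSeq → ℕ → ℂ) (ha : IsCoeffFamily a) (s t : BinSeq) (hst : s ≠ t) :
    FiniteDimensional ℂ (MvPowerSeries (Fin 2) ℂ ⧸ Ideal.span {phi a s, phi a t}) ∧
    Module.finrank ℂ (MvPowerSeries (Fin 2) ℂ ⧸ Ideal.span {phi a s, phi a t}) =
      (4 ^ (sInf {m : ℕ | s m ≠ t m} + 1) + 2) / 3 := by
  set m := sInf {m : ℕ | s m ≠ t m}
  have hm : s m ≠ t m := Nat.sInf_mem (Function.ne_iff.1 hst)
  have hst_lt : ∀ k < m, s k = t k := fun k hk => not_not.1 (Nat.notMem_of_lt_sInf hk)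
  obtain ⟨q, hq, hspan⟩ := exists_span_phi_pair_eq ha hst_lt hm
  rw [hspan]
  refine ⟨MvPowerSeries.finite_quotient_span_X_add hq _, ?_⟩
  rw [MvPowerSeries.finrank_quotient_span_X_add hq, pow_succ, ← three_mul_diffIndex_add_one m]
  omega
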